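/- Let l ∈ {2, 3}, k > 0 and R > 0 be fixed. Then lim_{n→∞} ∫_0^R r^{l−1} · j_n(kr)² dr = 0. -/

import Mathlib

open Real Nat Filter

/-- The spherical Bessel function of order `n`, defined by its everywhere absolutely convergent
power series `j_n(x) = Σ_{m=0}^∞ (−1)^m x^{2m+n} / (2^m · m! · (2n+2m+1)!!)`. -/
noncomputable def sphericalBesselJ (n : ℕ) (x : ℝ) : ℝ :=
  ∑' m : ℕ, (-1 : ℝ) ^ m * x ^ (2 * m + n) /
    (2 ^ m * (m.factorial : ℝ) * ((2 * n + 2 * m + 1)‼ : ℝ))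

/-!
Bounding the double factorials `(2n+2m+1)‼` below by `(2n+1)‼` compares the series of `j_n`
termwise with `|x|^n / (2n+1)‼ · exp (x²/2)`. Hence `|j_n| ≤ a^n e^{a²/2} / (2n+1)‼` on
`[-a, a]`, and since `(2n+1)‼ ≥ n!` this bound tends to `0`: the integrands converge to `0`
uniformly on the bounded interval of integration.
-/

open scoped Topology Interval

namespace Nat

theorem doubleFactorial_le_doubleFactorial_succ : ∀ n : ℕ, n‼ ≤ (n + 1)‼
  | 0 => le_rfl
  | 1 => by decide
  | n + 2 => by
    rw [doubleFactorial_add_two, doubleFactorial_add_two (n + 1)]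
    exact Nat.mul_le_mul (by omega) (doubleFactorial_le_doubleFactorial_succ n)

theorem doubleFactorial_mono : Monotone doubleFactorial :=
  monotone_nat_of_le_succ doubleFactorial_le_doubleFactorial_succ

theorem factorial_le_doubleFactorial_two_mul_add_one (n : ℕ) : n ! ≤ (2 * n + 1)‼ := by
  induction n with
  | zero => rfl
  | succ n ih =>
    rw [show 2 * (n + 1) + 1 = 2 * n + 1 + 2 by ring, doubleFactorial_add_two, factorial_succ]
    exact Nat.mul_le_mul (by omega) ih

end Nat

theorem tendsto_pow_div_doubleFactorial_atTop (a : ℝ) :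
    Tendsto (fun n : ℕ => a ^ n / ((2 * n + 1)‼ : ℝ)) atTop (𝓝 0) := by
  refine squeeze_zero_norm (fun n => ?_) (FloorSemiring.tendsto_pow_div_factorial_atTop |a|)
  rw [norm_div, norm_pow, Real.norm_eq_abs, Real.norm_natCast]
  gcongr
  exact_mod_cast factorial_le_doubleFactorial_two_mul_add_one n

theorem abs_sphericalBesselJ_le (n : ℕ) (x : ℝ) :
    |sphericalBesselJ n x| ≤ |x| ^ n * exp (x ^ 2 / 2) / ((2 * n + 1)‼ : ℝ) := by
  have hexp : HasSum (fun m : ℕ => (x ^ 2 / 2) ^ m / (m ! : ℝ)) (exp (x ^ 2 / 2)) := by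
    rw [exp_eq_exp_ℝ]
    exact NormedSpace.expSeries_div_hasSum_exp (x ^ 2 / 2)
  have hsum := hexp.mul_left (|x| ^ n / ((2 * n + 1)‼ : ℝ))
  rw [← Real.norm_eq_abs, ← div_mul_eq_mul_div, sphericalBesselJ]
  refine tsum_of_norm_bounded hsum fun m => ?_
  have hDm : ((2 * n + 1)‼ : ℝ) ≤ (2 * n + 2 * m + 1)‼ := by
    exact_mod_cast doubleFactorial_mono (by omega)
  rw [norm_div, norm_mul, norm_pow, norm_neg, norm_one, one_pow, one_mul, norm_pow,
    Real.norm_eq_abs, pow_add, pow_mul, sq_abs, div_pow, Real.norm_of_nonneg (by positivity)]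
  calc (x ^ 2) ^ m * |x| ^ n / (2 ^ m * m ! * (2 * n + 2 * m + 1)‼)
      ≤ (x ^ 2) ^ m * |x| ^ n / (2 ^ m * m ! * (2 * n + 1)‼) := by gcongr
    _ = |x| ^ n / (2 * n + 1)‼ * ((x ^ 2) ^ m / 2 ^ m / m !) := by field_simp

theorem abs_sphericalBesselJ_le_of_abs_le {a x : ℝ} (hx : |x| ≤ a) (n : ℕ) :
    |sphericalBesselJ n x| ≤ a ^ n * exp (a ^ 2 / 2) / ((2 * n + 1)‼ : ℝ) := by
  refine (abs_sphericalBesselJ_le n x).trans ?_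
  have hsq : x ^ 2 ≤ a ^ 2 := sq_le_sq' (abs_le.mp hx).1 (abs_le.mp hx).2
  have ha : 0 ≤ a := (abs_nonneg x).trans hx
  gcongr

theorem intervalIntegral.tendsto_integral_zero_of_norm_le {ι E : Type*} [NormedAddCommGroup E]
    [NormedSpace ℝ E] {l : Filter ι} {f : ι → ℝ → E} {C : ι → ℝ} {a b : ℝ}
    (hf : ∀ i, ∀ x ∈ Ι a b, ‖f i x‖ ≤ C i) (hC : Tendsto C l (𝓝 0)) :
    Tendsto (fun i => ∫ x in a..b, f i x) l (𝓝 0) := by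
  refine squeeze_zero_norm (fun i => norm_integral_le_of_norm_le_const (hf i)) ?_
  simpa using hC.mul_const |b - a|

theorem tendsto_integral_sphericalBesselJ_sq_general (l : ℕ) (k R : ℝ) :
    Tendsto (fun n : ℕ => ∫ r in (0 : ℝ)..R, r ^ (l - 1) * sphericalBesselJ n (k * r) ^ 2)
      atTop (nhds 0) := by
  set a := |k * R|
  have hM : Tendsto
      (fun n : ℕ => |R| ^ (l - 1) * (a ^ n / ((2 * n + 1)‼ : ℝ) * exp (a ^ 2 / 2)) ^ 2)
      atTop (𝓝 0) := by
    simpa using ((tendsto_pow_div_doubleFactorial_atTop a).mul_const _).pow 2 |>.const_mul _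
  refine intervalIntegral.tendsto_integral_zero_of_norm_le (fun n r hr => ?_) hM
  have hr : |r| ≤ |R| := by
    simpa using Set.abs_sub_left_of_mem_uIcc (Set.uIoc_subset_uIcc hr)
  have hkr : |k * r| ≤ a := by
    simp only [a, abs_mul]
    gcongr
  have hj := abs_sphericalBesselJ_le_of_abs_le hkr n
  rw [norm_mul, norm_pow, norm_pow, Real.norm_eq_abs, Real.norm_eq_abs, div_mul_eq_mul_div]
  gcongr

/-- Let `l ∈ {2, 3}`, `k > 0` and `R > 0` be fixed.  Then
`lim_{n→∞} ∫_0^R r^{l−1} · j_n(kr)² dr = 0`. -/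
theorem tendsto_integral_sphericalBesselJ_sq (l : ℕ) (hl : l = 2 ∨ l = 3)
    (k R : ℝ) (hk : 0 < k) (hR : 0 < R) :
    Tendsto (fun n : ℕ => ∫ r in (0 : ℝ)..R, r ^ (l - 1) * sphericalBesselJ n (k * r) ^ 2)
      atTop (nhds 0) :=
  tendsto_integral_sphericalBesselJ_sq_general l k R
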